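/- arXiv:1807.02904 — 5 statements merged into one kernel-verified Lean document; each statement's English description precedes it below -/
import Mathlib

section
/- Fix w ∈ Sₙ and let v ↦ v' be the greedy operation associated to w. If v ≤ w in Bruhat order, then v' = v. -/
namespace SchubertToric

open Equiv

/-- The number of inversions (= the length `ℓ`) of a permutation. -/
def invCount {n : ℕ} (w : Equiv.Perm (Fin n)) : ℕ :=
  ((Finset.univ : Finset (Fin n × Fin n)).filter fun p => p.1 < p.2 ∧ w p.2 < w p.1).card

/-- `initSeg w d` is the set `{w(1), …, w(d)}` (0-indexed: images of the first `d` indices). -/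
def initSeg {n : ℕ} (w : Equiv.Perm (Fin n)) (d : ℕ) : Finset (Fin n) :=
  (Finset.univ.filter fun i : Fin n => (i : ℕ) < d).image w

/-- `domLE S T`: the increasing rearrangement of `S` is componentwise ≤ that of `T`. -/
def domLE {n : ℕ} (S T : Finset (Fin n)) : Prop :=
  List.Forall₂ (· ≤ ·) (S.sort (· ≤ ·)) (T.sort (· ≤ ·))

/-- Bruhat order on `
Sₙ`, via the tableau criterion. -/
def bruhatLE {n : ℕ} (v w : Equiv.Perm (Fin n)) : Prop :=
  ∀ d : ℕ, domLE (initSeg v d) (initSeg w d)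

/-- `GreedyRel w v vp` says that `vp = v'`, the result of the greedy operation associated
to `w`: there is a sequence of indices `idx 0, idx 1, …`, each chosen as the *least* index
not previously chosen such that the increasing rearrangement of the previously chosen values
together with the new value is componentwise at most `{w(1),…,w(d)}`, and `vp d = v (idx d)`. -/
def GreedyRel {n : ℕ} (w v vp : Equiv.Perm (Fin n)) : Prop :=
  ∃ idx : Fin n → Fin n,
    (∀ d : Fin n, vp d = v (idx d)) ∧
    ∀ d : Fin n,
      IsLeast {i : Fin n |
        (∀ e : Fin n, e < d → idx e ≠ i) ∧
        domLE (insert (v i)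
            ((Finset.univ.filter fun e : Fin n => e < d).image fun e => v (idx e)))
          (initSeg w ((d : ℕ) + 1))}
        (idx d)

/-- Right weak order: `rightWeakLE u v` iff `v = u·s_{i₁}⋯s_{i_k}` with
`ℓ(u·s_{i₁}⋯s_{i_j}) = ℓ(u) + j` for all `0 ≤ j ≤ k`. -/
def rightWeakLE {n : ℕ} (u v : Equiv.Perm (Fin n)) : Prop :=
  ∃ L : List (Equiv.Perm (Fin n)),
    (∀ s ∈ L, ∃ (i : Fin n) (h : (i : ℕ) + 1 < n), s = Equiv.swap i ⟨(i : ℕ) + 1, h⟩) ∧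
    v = u * L.prod ∧
    ∀ k ≤ L.length, invCount (u * (L.take k).prod) = invCount u + k

/-- `Ref(w) = {(w(i),w(j)) : i < j, ℓ(w) − ℓ(t_{w(i),w(j)}·w) = 1}`. -/
def RefSet {n : ℕ} (w : Equiv.Perm (Fin n)) : Set (Fin n × Fin n) :=
  {p | ∃ i j : Fin n, i < j ∧ p = (w i, w j) ∧
    invCount (Equiv.swap (w i) (w j) * w) + 1 = invCount w}

/-- The (undirected) graph `Γ_w` on `Fin n` whose edges are the pairs in `Ref(w)`. -/
def refGraph {n : ℕ} (w : Equiv.Perm (Fin n)) : SimpleGraph (Fin n) :=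
  SimpleGraph.fromRel fun a b => (a, b) ∈ RefSet w

/-- The vertices of `Γ_w`: the integers occurring in pairs of `Ref(w)`. -/
def refVerts {n : ℕ} (w : Equiv.Perm (Fin n)) : Set (Fin n) :=
  {a | ∃ b, (a, b) ∈ RefSet w ∨ (b, a) ∈ RefSet w}

/-- The cone `C(v) = {x ∈ ℝⁿ : x_{v(1)} ≤ x_{v(2)} ≤ ⋯ ≤ x_{v(n)}}`. -/
def coneC {n : ℕ} (v : Equiv.Perm (Fin n)) : Set (Fin n → ℝ) :=
  {x | ∀ i j : Fin n, i ≤ j → x (v i) ≤ x (v j)}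

/-- `Ẽ_w(u) = {(u(i),u(j)) : i < j, t_{u(i),u(j)}·u ≤ w, |ℓ(u) − ℓ(t_{u(i),u(j)}·u)| = 1}`. -/
def Etil {n : ℕ} (w u : Equiv.Perm (Fin n)) : Set (Fin n × Fin n) :=
  {p | ∃ i j : Fin n, i < j ∧ p = (u i, u j) ∧
    bruhatLE (Equiv.swap (u i) (u j) * u) w ∧
    (invCount (Equiv.swap (u i) (u j) * u) + 1 = invCount u ∨
      invCount u + 1 = invCount (Equiv.swap (u i) (u j) * u))}

/-- An element `p = (a,b)` of `Ẽ_w(u)` is decomposable if it is a sum (under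
`(a,b)+(b,c) = (a,c)`) of two or more other elements of `Ẽ_w(u)`. -/
def Decomposable {n : ℕ} (w u : Equiv.Perm (Fin n)) (p : Fin n × Fin n) : Prop :=
  ∃ (m : ℕ) (c : ℕ → Fin n), 2 ≤ m ∧ c 0 = p.1 ∧ c m = p.2 ∧
    ∀ i < m, (c i, c (i + 1)) ∈ Etil w u ∧ (c i, c (i + 1)) ≠ p

/-- `E_w(u)`: the indecomposable elements of `Ẽ_w(u)`. -/
def Ew {n : ℕ} (w u : Equiv.Perm (Fin n)) : Set (Fin n × Fin n) :=
  {p | p ∈ Etil w u ∧ ¬ Decomposable w u p}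

/-- The longest element `w₀ = n(n−1)⋯21` of `Sₙ`. -/
def w0 {n : ℕ} : Equiv.Perm (Fin n) :=
  Function.Involutive.toPerm Fin.rev Fin.rev_rev

/-- If `v ≤ w` in Bruhat order then the greedy operation fixes `v`, i.e. `v' = v`. -/
theorem greedy_eq_self_of_bruhat_le {n : ℕ} (w v vp : Equiv.Perm (Fin n))
    (hvw : bruhatLE v w) (h : GreedyRel w v vp) : vp = v := by
  obtain ⟨idx, hvp, hle⟩ := h
  have seg : ∀ d : Fin n,
      insert (v d) ((Finset.univ.filter fun e : Fin n => e < d).image v)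
        = initSeg v ((d : ℕ) + 1) := by
    intro d
    ext x
    simp only [initSeg, Finset.mem_insert, Finset.mem_image, Finset.mem_filter,
      Finset.mem_univ, true_and, Fin.lt_def, Nat.lt_succ_iff_lt_or_eq]
    constructor
    · rintro (rfl | ⟨e, he, rfl⟩)
      · exact ⟨d, Or.inr rfl, rfl⟩
      · exact ⟨e, Or.inl he, rfl⟩
    · rintro ⟨i, hi | hi, rfl⟩
      · exact Or.inr ⟨i, hi, rfl⟩
      · exact Or.inl (by rw [Fin.eq_of_val_eq hi])
  have key : ∀ d : Fin n, idx d = d := by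
    intro d
    induction d using WellFoundedLT.induction with
    | _ d ih =>
      have hmem : d ∈ {i : Fin n |
          (∀ e : Fin n, e < d → idx e ≠ i) ∧
          domLE (insert (v i)
              ((Finset.univ.filter fun e : Fin n => e < d).image fun e => v (idx e)))
            (initSeg w ((d : ℕ) + 1))} := by
        constructor
        · intro e he
          rw [ih e he]
          exact ne_of_lt he
        · have himg : ((Finset.univ.filter fun e : Fin n => e < d).image fun e => v (idx e))
              = (Finset.univ.filter fun e : Fin n => e < d).image v := by
            apply Finset.image_congr
            intro e he
            simp only [Finset.coe_filter, Finset.mem_univ, true_and, Set.mem_setOf_eq] at he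
            simp only [ih e he]
          rw [himg, seg d]
          exact hvw ((d : ℕ) + 1)
      have h1 : idx d ≤ d := (hle d).2 hmem
      have h2 : ¬ idx d < d := by
        intro hlt
        have := (hle d).1.1 (idx d) hlt
        exact this (by rw [ih (idx d) hlt])
      exact le_antisymm h1 (not_lt.mp h2)
  ext d
  rw [hvp d, key d]
end SchubertToric
end

section
/- Fix w ∈ Sₙ and let v ↦ v' be the greedy operation associated to w. If w₀ = n(n−1)⋯21 denotes the longest element of Sₙ, then w₀' = w. -/
namespace SchubertToric

open Equiv

/-! By induction on `d`, the values chosen before step `d` are `w(1), …, w(d-1)`; with those fixed,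
adding a new value `a` keeps the rearrangement below `{w(1), …, w(d)}` iff `a ≤ w(d)`. Since `w₀`
reverses the order, the least admissible index is the one whose value is the largest `≤ w(d)`
not yet used, namely `w₀(w(d))`. -/

section SortedDomination

variable {α : Type*}

lemma forall₂_le_antisymm [PartialOrder α] :
    ∀ {l m : List α}, List.Forall₂ (· ≤ ·) l m → List.Forall₂ (· ≤ ·) m l → l = m
  | [], [], .nil, _ => rfl
  | _ :: _, _ :: _, .cons hab h, .cons hba h' => by
      rw [le_antisymm hab hba, forall₂_le_antisymm h h']

variable [LinearOrder α]

lemma forall₂_le_cons_orderedInsert {a c : α} :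
    ∀ {l : List α}, List.Pairwise (· ≤ ·) (c :: l) → c ≤ a →
      List.Forall₂ (· ≤ ·) (c :: l) (l.orderedInsert (· ≤ ·) a)
  | [], _, hca => by simpa using hca
  | d :: l, hs, hca => by
      rw [List.pairwise_cons] at hs
      rw [List.orderedInsert]
      split_ifs with had
      · exact .cons hca (List.forall₂_same.2 fun _ _ => le_rfl)
      · exact .cons (hs.1 d (by simp))
          (forall₂_le_cons_orderedInsert hs.2 (not_le.1 had).le)

lemma forall₂_le_orderedInsert_of_le {a b : α} (hba : b ≤ a) :
    ∀ {l : List α}, List.Pairwise (· ≤ ·) l →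
      List.Forall₂ (· ≤ ·) (l.orderedInsert (· ≤ ·) b) (l.orderedInsert (· ≤ ·) a)
  | [], _ => by simpa using hba
  | c :: l, hs => by
      rw [List.orderedInsert, List.orderedInsert]
      by_cases hbc : b ≤ c
      · rw [if_pos hbc]
        by_cases hac : a ≤ c
        · rw [if_pos hac]
          exact .cons hba (List.forall₂_same.2 fun _ _ => le_rfl)
        · rw [if_neg hac]
          exact .cons hbc (forall₂_le_cons_orderedInsert hs (not_le.1 hac).le)
      · rw [if_neg hbc, if_neg fun hac => hbc (hba.trans hac)]
        exact .cons le_rfl (forall₂_le_orderedInsert_of_le hba (List.pairwise_cons.1 hs).2)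

lemma sort_insert_eq_orderedInsert {S : Finset α} {a : α} (ha : a ∉ S) :
    (insert a S).sort (· ≤ ·) = (S.sort (· ≤ ·)).orderedInsert (· ≤ ·) a := by
  refine List.Perm.eq_of_pairwise' (Finset.pairwise_sort _ _)
    ((Finset.pairwise_sort _ _).orderedInsert _ _) ?_
  refine (List.perm_of_nodup_nodup_toFinset_eq (Finset.sort_nodup _ _) ?_ ?_).trans
    (List.perm_orderedInsert _ _ _).symm
  · exact List.nodup_cons.2 ⟨by simpa using ha, Finset.sort_nodup _ _⟩
  · simp

end SortedDomination

section Domination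

variable {n : ℕ}

lemma domLE_refl (S : Finset (Fin n)) : domLE S S :=
  List.forall₂_same.2 fun _ _ => le_rfl

lemma domLE_antisymm {S T : Finset (Fin n)} (hST : domLE S T) (hTS : domLE T S) : S = T := by
  rw [← Finset.sort_toFinset S (· ≤ ·), ← Finset.sort_toFinset T (· ≤ ·),
    forall₂_le_antisymm hST hTS]

lemma domLE_insert_insert_of_le {S : Finset (Fin n)} {a b : Fin n} (ha : a ∉ S) (hb : b ∉ S)
    (hab : a ≤ b) : domLE (insert a S) (insert b S) := by
  unfold domLE
  rw [sort_insert_eq_orderedInsert ha, sort_insert_eq_orderedInsert hb]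
  exact forall₂_le_orderedInsert_of_le hab (Finset.pairwise_sort _ _)

lemma domLE_insert_insert_iff {S : Finset (Fin n)} {a b : Fin n} (ha : a ∉ S) (hb : b ∉ S) :
    domLE (insert a S) (insert b S) ↔ a ≤ b := by
  refine ⟨fun h => ?_, domLE_insert_insert_of_le ha hb⟩
  by_contra! hba
  have hab : insert a S = insert b S := domLE_antisymm h (domLE_insert_insert_of_le hb ha hba.le)
  have : a ∈ insert b S := hab ▸ Finset.mem_insert_self a S
  exact (Finset.mem_insert.1 this).elim hba.ne' ha

end Domination

section InitialSegments

variable {n : ℕ} (w : Equiv.Perm (Fin n))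

lemma mem_initSeg {a : Fin n} {d : ℕ} : a ∈ initSeg w d ↔ ((w⁻¹ a : Fin n) : ℕ) < d := by
  simp only [initSeg, Finset.mem_image, Finset.mem_filter, Finset.mem_univ, true_and]
  exact ⟨fun ⟨i, hi, hwi⟩ => by simpa [← hwi] using hi, fun h => ⟨w⁻¹ a, h, by simp⟩⟩

lemma apply_notMem_initSeg (d : Fin n) : w d ∉ initSeg w d := by
  simp [mem_initSeg]

lemma initSeg_succ (d : Fin n) : initSeg w (d + 1) = insert (w d) (initSeg w d) := by
  ext a
  rw [Finset.mem_insert, mem_initSeg, mem_initSeg, Nat.lt_succ_iff_lt_or_eq, Fin.val_inj,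
    Equiv.Perm.inv_eq_iff_eq, or_comm]

lemma image_filter_lt_eq_initSeg {f : Fin n → Fin n} {d : Fin n} (hf : ∀ e < d, f e = w e) :
    (Finset.univ.filter fun e : Fin n => e < d).image f = initSeg w d :=
  Finset.image_congr fun e he => hf e (Finset.mem_filter.1 he).2

end InitialSegments

lemma w0_w0_apply {n : ℕ} (i : Fin n) : w0 (w0 i) = i := Fin.rev_rev i

lemma w0_greedy_step {n : ℕ} {w : Equiv.Perm (Fin n)} {idx : Fin n → Fin n} {d : Fin n}
    (hprev : ∀ e < d, w0 (idx e) = w e)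
    (hleast : IsLeast {i : Fin n |
        (∀ e : Fin n, e < d → idx e ≠ i) ∧
        domLE (insert (w0 i)
            ((Finset.univ.filter fun e : Fin n => e < d).image fun e => w0 (idx e)))
          (initSeg w ((d : ℕ) + 1))}
        (idx d)) :
    w0 (idx d) = w d := by
  rw [image_filter_lt_eq_initSeg w hprev, initSeg_succ] at hleast
  have hfresh : ∀ i, (∀ e < d, idx e ≠ i) → w0 i ∉ initSeg w d := by
    intro i hi hmem
    obtain ⟨e, he, hei⟩ := Finset.mem_image.1 hmem
    have hed : e < d := (Finset.mem_filter.1 he).2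
    exact hi e hed (w0.injective (by rw [hprev e hed, hei]))
  obtain ⟨⟨hunused, hdom⟩, hmin⟩ := hleast
  have hle : w0 (idx d) ≤ w d :=
    (domLE_insert_insert_iff (hfresh _ hunused) (apply_notMem_initSeg w d)).1 hdom
  have hcand : idx d ≤ w0 (w d) := by
    refine hmin ⟨fun e he hed => he.ne (w.injective ?_), ?_⟩
    · rw [← hprev e he, hed, w0_w0_apply]
    · rw [w0_w0_apply]
      exact domLE_refl _
  exact hle.antisymm (Fin.le_rev_iff.1 hcand)

/-- The greedy operation applied to the longest element `w₀ = n(n−1)⋯21`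
yields `w₀' = w`. -/
theorem greedy_longest_eq {n : ℕ} (w vp : Equiv.Perm (Fin n))
    (h : GreedyRel w w0 vp) : vp = w := by
  obtain ⟨idx, hvp, hleast⟩ := h
  have hidx : ∀ d, w0 (idx d) = w d := fun d =>
    WellFoundedLT.induction (motive := fun d => w0 (idx d) = w d) d
      fun d hprev => w0_greedy_step hprev (hleast d)
  ext d
  rw [hvp, hidx]
end SchubertToric
end

section
/- Fix w ∈ Sₙ and let v ↦ v' be the greedy operation associated to w. Then for every v ∈ Sₙ one has v' ≤_R v in the right weak order. -/
section

variable {α : Type*} [LinearOrder α]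

theorem List.forall₂_le_trans {l₁ l₂ l₃ : List α} (h₁₂ : List.Forall₂ (· ≤ ·) l₁ l₂)
    (h₂₃ : List.Forall₂ (· ≤ ·) l₂ l₃) : List.Forall₂ (· ≤ ·) l₁ l₃ := by
  induction h₁₂ generalizing l₃ with
  | nil => exact h₂₃
  | cons hab _ ih =>
    obtain _ | ⟨hbc, htl⟩ := h₂₃
    exact .cons (hab.trans hbc) (ih htl)

theorem List.forall₂_le_orderedInsert {a x : α} {l : List α} (hl : List.Pairwise (· ≤ ·) (a :: l))
    (hax : a ≤ x) : List.Forall₂ (· ≤ ·) (a :: l) (l.orderedInsert (· ≤ ·) x) := by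
  induction l generalizing a with
  | nil => exact .cons hax .nil
  | cons b l ih =>
    by_cases hxb : x ≤ b
    · rw [List.orderedInsert_cons_of_le _ _ hxb]
      exact .cons hax (List.forall₂_refl _)
    · rw [List.orderedInsert_of_not_le _ _ hxb]
      exact .cons (List.rel_of_pairwise_cons hl (by simp)) (ih hl.of_cons (le_of_not_ge hxb))

theorem List.forall₂_orderedInsert_of_le {x y : α} (hxy : x ≤ y) {l : List α}
    (hl : List.Pairwise (· ≤ ·) l) :
    List.Forall₂ (· ≤ ·) (l.orderedInsert (· ≤ ·) x) (l.orderedInsert (· ≤ ·) y) := by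
  induction l with
  | nil => exact .cons hxy .nil
  | cons a l ih =>
    by_cases hxa : x ≤ a
    · rw [List.orderedInsert_cons_of_le _ _ hxa]
      by_cases hya : y ≤ a
      · rw [List.orderedInsert_cons_of_le _ _ hya]
        exact .cons hxy (List.forall₂_refl _)
      · rw [List.orderedInsert_of_not_le _ _ hya]
        exact .cons hxa (forall₂_le_orderedInsert hl (le_of_not_ge hya))
    · rw [List.orderedInsert_of_not_le _ _ hxa,
        List.orderedInsert_of_not_le _ _ fun hya => hxa (hxy.trans hya)]
      exact .cons le_rfl (ih hl.of_cons)

theorem Finset.sort_insert_eq_orderedInsert [DecidableEq α] {a : α} {s : Finset α} (ha : a ∉ s) :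
    (insert a s).sort (· ≤ ·) = (s.sort (· ≤ ·)).orderedInsert (· ≤ ·) a := by
  refine List.Perm.eq_of_pairwise' (Finset.pairwise_sort _ _)
    ((Finset.pairwise_sort _ _).orderedInsert a _) ?_
  refine .trans ?_ (List.perm_orderedInsert _ _ _).symm
  rw [← Multiset.coe_eq_coe, Finset.sort_eq, ← Multiset.cons_coe, Finset.sort_eq,
    Finset.insert_val_of_notMem ha]

end

theorem Fin.strictMono_of_lt_of_val_eq_succ {α : Type*} [Preorder α] {n : ℕ} {f : Fin n → α}
    (h : ∀ i j : Fin n, (j : ℕ) = i + 1 → f i < f j) : StrictMono f := by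
  cases n with
  | zero => exact fun i => i.elim0
  | succ m => exact Fin.strictMono_iff_lt_succ.2 fun i => h _ _ rfl

namespace SchubertToric

open Equiv

theorem domLE_insert_of_le {n : ℕ} {a b : Fin n} {S T : Finset (Fin n)} (hab : a ≤ b)
    (ha : a ∉ S) (hb : b ∉ S) (h : domLE (insert b S) T) : domLE (insert a S) T := by
  unfold domLE at h ⊢
  rw [Finset.sort_insert_eq_orderedInsert hb] at h
  rw [Finset.sort_insert_eq_orderedInsert ha]
  exact List.forall₂_le_trans (List.forall₂_orderedInsert_of_le hab (Finset.pairwise_sort _ _)) h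

section WeakOrder

variable {n : ℕ}

def leftInversions (u : Perm (Fin n)) : Finset (Fin n × Fin n) :=
  Finset.univ.filter fun p => p.1 < p.2 ∧ u⁻¹ p.2 < u⁻¹ p.1

theorem card_leftInversions (u : Perm (Fin n)) : (leftInversions u).card = invCount u :=
  Finset.card_nbij' (fun p => (u⁻¹ p.2, u⁻¹ p.1)) (fun p => (u p.2, u p.1))
    (by intro p; simp +contextual [leftInversions])
    (by intro p; simp +contextual [leftInversions])
    (by intro p; simp) (by intro p; simp)

theorem swap_apply_lt_swap_apply_iff {i j x y : Fin n} (hij : (j : ℕ) = i + 1) :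
    swap i j x < swap i j y ↔ x < y ∧ ¬(x = i ∧ y = j) ∨ x = j ∧ y = i := by
  simp only [swap_apply_def, Fin.lt_def, Fin.ext_iff]
  split_ifs <;> omega

theorem leftInversions_mul_swap {u : Perm (Fin n)} {i j : Fin n} (hij : (j : ℕ) = i + 1)
    (h : u i < u j) : leftInversions (u * swap i j) = insert (u i, u j) (leftInversions u) := by
  ext ⟨a, b⟩
  simp only [leftInversions, Finset.mem_insert, Finset.mem_filter, Finset.mem_univ, true_and,
    mul_inv_rev, swap_inv, Perm.mul_apply, swap_apply_lt_swap_apply_iff hij, Prod.mk.injEq,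
    Perm.inv_eq_iff_eq]
  grind

theorem invCount_mul_swap {u : Perm (Fin n)} {i j : Fin n} (hij : (j : ℕ) = i + 1)
    (h : u i < u j) : invCount (u * swap i j) = invCount u + 1 := by
  have hnotMem : (u i, u j) ∉ leftInversions u := by
    simp [leftInversions, Fin.le_def, hij]
  rw [← card_leftInversions, ← card_leftInversions, leftInversions_mul_swap hij h,
    Finset.card_insert_of_notMem hnotMem]

theorem exists_ascent_of_leftInversions_subset {u v : Perm (Fin n)}
    (h : leftInversions u ⊆ leftInversions v) (hne : u ≠ v) :
    ∃ i j : Fin n, (j : ℕ) = i + 1 ∧ u i < u j ∧ (u i, u j) ∈ leftInversions v := by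
  by_contra! hasc
  suffices StrictMono (v⁻¹ * u) from
    hne (inv_mul_eq_one.1 (Equiv.ext fun _ => this.apply_eq)).symm
  refine Fin.strictMono_of_lt_of_val_eq_succ fun i j hij => ?_
  have hij' : i < j := Fin.lt_def.2 (by omega)
  rcases lt_or_gt_of_ne (u.injective.ne hij'.ne) with hu | hu
  · have := hasc i j hij hu
    simp only [leftInversions, Finset.mem_filter, Finset.mem_univ, true_and, hu, not_lt] at this
    exact lt_of_le_of_ne this (by simpa using hij'.ne)
  · have := h (by simpa [leftInversions, hu] : (u j, u i) ∈ leftInversions u)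
    exact (Finset.mem_filter.1 this).2.2

theorem rightWeakLE_refl (u : Perm (Fin n)) : rightWeakLE u u :=
  ⟨[], by simp, by simp, by simp⟩

theorem rightWeakLE_of_mul_swap {u v : Perm (Fin n)} {i j : Fin n} (hij : (j : ℕ) = i + 1)
    (hlen : invCount (u * swap i j) = invCount u + 1) (h : rightWeakLE (u * swap i j) v) :
    rightWeakLE u v := by
  obtain ⟨L, hsimple, rfl, hlenL⟩ := h
  refine ⟨swap i j :: L, ?_, by rw [List.prod_cons, mul_assoc], ?_⟩
  · rintro s (_ | ⟨_, hs⟩)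
    · exact ⟨i, hij ▸ j.isLt, by congr; exact Fin.ext hij⟩
    · exact hsimple s hs
  · rintro (_ | k) hk
    · simp
    · rw [List.take_succ_cons, List.prod_cons, ← mul_assoc,
        hlenL k (Nat.le_of_succ_le_succ hk), hlen]
      omega

theorem rightWeakLE_of_leftInversions_subset {u v : Perm (Fin n)}
    (h : leftInversions u ⊆ leftInversions v) : rightWeakLE u v := by
  by_cases huv : u = v
  · exact huv ▸ rightWeakLE_refl u
  obtain ⟨i, j, hij, hasc, hmem⟩ := exists_ascent_of_leftInversions_subset h huv
  have hlen := invCount_mul_swap hij hasc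
  have h' : leftInversions (u * swap i j) ⊆ leftInversions v := by
    rw [leftInversions_mul_swap hij hasc]
    exact Finset.insert_subset hmem h
  have hle : invCount (u * swap i j) ≤ invCount v := by
    simpa only [card_leftInversions] using Finset.card_le_card h'
  exact rightWeakLE_of_mul_swap hij hlen (rightWeakLE_of_leftInversions_subset h')
termination_by invCount v - invCount u

end WeakOrder

theorem GreedyRel.leftInversions_subset {n : ℕ} {w v vp : Perm (Fin n)} (h : GreedyRel w v vp) :
    leftInversions vp ⊆ leftInversions v := by
  obtain ⟨idx, hvp, hleast⟩ := h
  intro ⟨a, b⟩ hab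
  simp only [leftInversions, Finset.mem_filter, Finset.mem_univ, true_and] at hab ⊢
  obtain ⟨hab, hqp⟩ := hab
  set p := vp⁻¹ a
  set q := vp⁻¹ b
  have hva : v (idx p) = a := (hvp p).symm.trans (vp.apply_symm_apply a)
  have hvb : v (idx q) = b := (hvp q).symm.trans (vp.apply_symm_apply b)
  have hfresh : ∀ d, q ≤ d →
      v (idx d) ∉ (Finset.univ.filter fun e => e < q).image fun e => v (idx e) := by
    intro d hqd hmem
    obtain ⟨e, he, heq⟩ := Finset.mem_image.1 hmem
    exact (hleast d).1.1 e ((Finset.mem_filter.1 he).2.trans_le hqd) (v.injective heq)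
  have hcand : idx q ≤ idx p := by
    refine (hleast q).2 ⟨fun e he => (hleast p).1.1 e (he.trans hqp), ?_⟩
    have hle : v (idx p) ≤ v (idx q) := by rw [hva, hvb]; exact hab.le
    exact domLE_insert_of_le hle (hfresh p hqp.le) (hfresh q le_rfl) (hleast q).1.2
  have hne : idx q ≠ idx p := fun heq => hab.ne' (by rw [← hva, ← hvb, heq])
  rw [Perm.inv_eq_iff_eq.2 hva.symm, Perm.inv_eq_iff_eq.2 hvb.symm]
  exact ⟨hab, hcand.lt_of_ne hne⟩

/-- For every `v ∈ Sₙ`, one has `v' ≤_R v` in the right weak order. -/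
theorem greedy_rightWeak_le {n : ℕ} (w v vp : Equiv.Perm (Fin n))
    (h : GreedyRel w v vp) : rightWeakLE vp v :=
  rightWeakLE_of_leftInversions_subset h.leftInversions_subset

end SchubertToric
end

section
/- Let w ∈ Sₙ and (a,b) ∈ Ref(w). Then e_b − e_a cannot be written as Σ_{i=1}^{k} c_i (e_{b_i} − e_{a_i}) with k ≥ 1, real coefficients c_i > 0, and pairwise distinct pairs (a_i,b_i) ∈ Ref(w) all different from (a,b). In other words, for each (a,b) ∈ Ref(w) the vector e_b − e_a spans an extreme ray (edge) of the convex cone D_w in ℝⁿ generated by {e_y − e_x : (x,y) ∈ Ref(w)}. -/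
namespace SchubertToric

open Equiv

/-! A representation of `e_b − e_a` as a positive combination of edge vectors `e_y − e_x` is a
unit flow from `a` to `b`; summing coordinates over the set of vertices from which `b` can be
reached shows that the edges used must contain a path from `a` to `b`. Every `(x, y) ∈ Ref(w)`
goes down in value and right in position, so the first step `a → x` of a path avoiding the edge
`(a, b)` lands strictly inside the rectangle spanned by the positions and values of `a` and `b`,
which `(a, b) ∈ Ref(w)` forbids. That emptiness condition comes from the length formula
`ℓ(w) = ℓ(w·t) + 1 + 2·#{k : i < k < j, w(j) < w(k) < w(i)}` for `t` the transposition of the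
positions `i < j`. -/

section Flow

open Finset

theorem reflTransGen_of_single_sub_single_eq_sum {α ι R : Type*} [Fintype α] [DecidableEq α]
    [Fintype ι] [Ring R] [PartialOrder R] [IsOrderedRing R] [Nontrivial R] {a b : α}
    (c : ι → R) (hc : ∀ i, 0 ≤ c i) (p : ι → α × α)
    (h : (Pi.single b 1 - Pi.single a 1 : α → R) =
      ∑ i, c i • (Pi.single (p i).2 1 - Pi.single (p i).1 1)) :
    Relation.ReflTransGen (fun x y => ∃ i, p i = (x, y)) a b := by
  classical
  by_contra hab
  set U := univ.filter fun z => Relation.ReflTransGen (fun x y => ∃ i, p i = (x, y)) z b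
  have hbU : b ∈ U := mem_filter.2 ⟨mem_univ b, .refl⟩
  have haU : a ∉ U := by simpa [U] using hab
  have hclosed : ∀ i, (p i).2 ∈ U → (p i).1 ∈ U := fun i hi => by
    simp only [U, mem_filter, mem_univ, true_and] at hi ⊢
    exact .head ⟨i, rfl⟩ hi
  have hsum := congrArg (fun v : α → R => ∑ z ∈ U, v z) h
  simp only [Finset.sum_apply, Pi.smul_apply, smul_eq_mul] at hsum
  rw [sum_comm] at hsum
  simp only [Pi.sub_apply, sum_sub_distrib, ← mul_sum, sum_pi_single', if_pos hbU, if_neg haU,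
    sub_zero] at hsum
  -- `U` is closed under stepping back along an edge, so no edge has positive sum over `U`.
  have hnonpos :
      ∑ i, c i * ((if (p i).2 ∈ U then 1 else 0) - if (p i).1 ∈ U then 1 else 0) ≤ 0 := by
    refine sum_nonpos fun i _ => ?_
    by_cases hi : (p i).2 ∈ U
    · simp [hi, hclosed i hi]
    · rw [if_neg hi, zero_sub]
      split_ifs <;> simp [hc i]
  exact (zero_lt_one (α := R)).not_ge (hsum ▸ hnonpos)

end Flow

section Length

open Finset

variable {n : ℕ}

theorem invCount_eq_sum (w : Perm (Fin n)) :
    (invCount w : ℤ) = ∑ p : Fin n × Fin n, if p.1 < p.2 ∧ w p.2 < w p.1 then 1 else 0 := by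
  rw [invCount, sum_boole]

theorem invCount_mul_swap_eq_sum (w : Perm (Fin n)) (i j : Fin n) :
    (invCount (w * swap i j) : ℤ) =
      ∑ p : Fin n × Fin n, if swap i j p.1 < swap i j p.2 ∧ w p.2 < w p.1 then 1 else 0 := by
  rw [invCount_eq_sum, ← (prodCongr (swap i j) (swap i j)).sum_comp]
  simp [Perm.mul_apply]

theorem ite_lt_sub_ite_swap_lt {i j : Fin n} (hij : i < j) (p q : Fin n) :
    ((if p < q then 1 else 0) - if swap i j p < swap i j q then 1 else 0 : ℤ) =
      (if p = i ∧ q ∈ Ioc i j then 1 else 0) + (if p ∈ Ioo i j ∧ q = j then 1 else 0)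
      - (if p ∈ Ioc i j ∧ q = i then 1 else 0) - (if p = j ∧ q ∈ Ioo i j then 1 else 0) := by
  simp only [swap_apply_def, mem_Ioc, mem_Ioo]
  simp only [Fin.lt_def, Fin.le_def, Fin.ext_iff] at hij ⊢
  split_ifs <;> omega

theorem invCount_sub_invCount_mul_swap {w : Perm (Fin n)} {i j : Fin n} (hij : i < j) :
    (invCount w : ℤ) - invCount (w * swap i j) =
      (if w j < w i then 1 else 0) - (if w i < w j then 1 else 0) +
      ∑ k ∈ Ioo i j, ((if w k < w i then 1 else 0) + (if w j < w k then 1 else 0)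
        - (if w i < w k then 1 else 0) - (if w k < w j then 1 else 0)) := by
  have hdiff : (invCount w : ℤ) - invCount (w * swap i j) = ∑ p : Fin n × Fin n,
      ((if p.1 < p.2 then 1 else 0) - (if swap i j p.1 < swap i j p.2 then 1 else 0)) *
        (if w p.2 < w p.1 then 1 else 0) := by
    rw [invCount_eq_sum, invCount_mul_swap_eq_sum, ← sum_sub_distrib]
    refine sum_congr rfl fun p _ => ?_
    simp only [ite_and]
    split_ifs <;> simp
  rw [hdiff, Fintype.sum_prod_type]
  simp only [ite_lt_sub_ite_swap_lt hij, add_mul, sub_mul, ite_mul, one_mul, zero_mul, ite_and,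
    sum_add_distrib, sum_sub_distrib, sum_ite_irrel, sum_const_zero, Fintype.sum_ite_eq',
    Fintype.sum_ite_mem]
  rw [← Ioo_insert_right hij, sum_insert right_notMem_Ioo, sum_insert right_notMem_Ioo]
  ring

theorem invCount_eq_invCount_mul_swap_add {w : Perm (Fin n)} {i j : Fin n} (hij : i < j)
    (hw : w j < w i) :
    invCount w = invCount (w * swap i j) + 1 + 2 * #{k ∈ Ioo i j | w j < w k ∧ w k < w i} := by
  have hk : ∀ k ∈ Ioo i j, ((if w k < w i then 1 else 0) + (if w j < w k then 1 else 0)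
      - (if w i < w k then 1 else 0) - (if w k < w j then 1 else 0) : ℤ) =
      2 * if w j < w k ∧ w k < w i then 1 else 0 := by
    intro k hk
    obtain ⟨hik, hkj⟩ := mem_Ioo.1 hk
    rcases lt_or_gt_of_ne (w.injective.ne hkj.ne) with h₂ | h₂
    · have h₁ := h₂.trans hw
      simp [h₁, h₂, h₁.not_gt, h₂.not_gt]
    · rcases lt_or_gt_of_ne (w.injective.ne hik.ne') with h₁ | h₁ <;>
        simp [h₁, h₂, h₁.not_gt, h₂.not_gt]
  have hdiff := invCount_sub_invCount_mul_swap (w := w) hij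
  rw [sum_congr rfl hk, ← mul_sum, sum_boole, if_pos hw, if_neg hw.not_gt] at hdiff
  push_cast at hdiff
  omega

theorem lt_and_forall_notMem_Ioo_of_invCount_mul_swap_add_one {w : Perm (Fin n)} {i j : Fin n}
    (hij : i < j) (h : invCount (w * swap i j) + 1 = invCount w) :
    w j < w i ∧ ∀ k ∈ Ioo i j, w k ∉ Ioo (w j) (w i) := by
  have hw : w j < w i := by
    by_contra! hle
    have hlt : (w * swap i j) j < (w * swap i j) i := by
      simpa using hle.lt_of_ne (w.injective.ne hij.ne)
    have hℓ := invCount_eq_invCount_mul_swap_add hij hlt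
    rw [mul_swap_mul_self] at hℓ
    omega
  refine ⟨hw, fun k hk hkw => ?_⟩
  have hℓ := invCount_eq_invCount_mul_swap_add hij hw
  have hpos : 0 < #{k ∈ Ioo i j | w j < w k ∧ w k < w i} :=
    card_pos.2 ⟨k, mem_filter.2 ⟨hk, mem_Ioo.1 hkw⟩⟩
  omega

end Length

section RefSet

variable {n : ℕ} {w : Perm (Fin n)}

theorem exists_of_mem_refSet {x y : Fin n} (h : (x, y) ∈ RefSet w) :
    ∃ i j, i < j ∧ x = w i ∧ y = w j ∧ y < x ∧ ∀ k ∈ Finset.Ioo i j, w k ∉ Finset.Ioo y x := by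
  obtain ⟨i, j, hij, hxy, hℓ⟩ := h
  obtain ⟨rfl, rfl⟩ := Prod.mk.inj hxy
  rw [swap_apply_apply, inv_mul_cancel_right] at hℓ
  exact ⟨i, j, hij, rfl, rfl, lt_and_forall_notMem_Ioo_of_invCount_mul_swap_add_one hij hℓ⟩

theorem lt_of_mem_refSet {x y : Fin n} (h : (x, y) ∈ RefSet w) : y < x ∧ w⁻¹ x < w⁻¹ y := by
  obtain ⟨i, j, hij, rfl, rfl, hyx, -⟩ := exists_of_mem_refSet h
  simpa using ⟨hyx, hij⟩

theorem inv_apply_notMem_Ioo_of_mem_refSet {x y z : Fin n} (h : (x, y) ∈ RefSet w)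
    (hz : z ∈ Set.Ioo y x) : w⁻¹ z ∉ Set.Ioo (w⁻¹ x) (w⁻¹ y) := by
  obtain ⟨i, j, -, rfl, rfl, -, hempty⟩ := exists_of_mem_refSet h
  intro hwz
  exact hempty (w⁻¹ z) (by simpa using hwz) (by simpa using hz)

theorem le_of_reflTransGen_refSet {z b : Fin n}
    (h : Relation.ReflTransGen (fun x y => (x, y) ∈ RefSet w) z b) : b ≤ z ∧ w⁻¹ z ≤ w⁻¹ b := by
  induction h using Relation.ReflTransGen.head_induction_on with
  | refl => exact ⟨le_rfl, le_rfl⟩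
  | head hstep _ ih =>
    obtain ⟨hlt, hpos⟩ := lt_of_mem_refSet hstep
    exact ⟨ih.1.trans hlt.le, hpos.le.trans ih.2⟩

theorem not_reflTransGen_of_mem_refSet {a b : Fin n} (hab : (a, b) ∈ RefSet w) :
    ¬ Relation.ReflTransGen (fun x y => (x, y) ∈ RefSet w ∧ (x, y) ≠ (a, b)) a b := by
  intro h
  rcases h.cases_head with rfl | ⟨x, ⟨hax, hne⟩, hxb⟩
  · exact (lt_of_mem_refSet hab).1.false
  · have hbx : b ≠ x := by rintro rfl; exact hne rfl
    obtain ⟨hval, hpos⟩ :=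
      le_of_reflTransGen_refSet (Relation.ReflTransGen.mono (fun _ _ h => h.1) _ _ hxb)
    obtain ⟨hxa, hax'⟩ := lt_of_mem_refSet hax
    exact inv_apply_notMem_Ioo_of_mem_refSet hab ⟨hval.lt_of_ne hbx, hxa⟩
      ⟨hax', hpos.lt_of_ne (w⁻¹.injective.ne hbx.symm)⟩

end RefSet

theorem edge_vector_extreme_general {n : ℕ} (w : Equiv.Perm (Fin n)) (a b : Fin n)
    (hab : (a, b) ∈ RefSet w) (k : ℕ)
    (c : Fin k → ℝ) (p : Fin k → Fin n × Fin n)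
    (hc : ∀ i, 0 < c i) (hp : ∀ i, p i ∈ RefSet w) (hne : ∀ i, p i ≠ (a, b)) :
    (Pi.single b 1 - Pi.single a 1 : Fin n → ℝ) ≠
      ∑ i, c i • (Pi.single (p i).2 1 - Pi.single (p i).1 1 : Fin n → ℝ) := by
  intro h
  have hpath := reflTransGen_of_single_sub_single_eq_sum c (fun i => (hc i).le) p h
  exact not_reflTransGen_of_mem_refSet hab <|
    Relation.ReflTransGen.mono (fun _ _ ⟨i, hi⟩ => hi ▸ ⟨hp i, hne i⟩) _ _ hpath

/-- For `(a,b) ∈ Ref(w)`, the vector `e_b − e_a` cannot be written as a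
positive combination `Σ c_i (e_{b_i} − e_{a_i})` of pairwise distinct elements of `Ref(w)`
all different from `(a,b)`; i.e. `e_b − e_a` spans an extreme ray of the cone `D_w`. -/
theorem edge_vector_extreme {n : ℕ} (w : Equiv.Perm (Fin n)) (a b : Fin n)
    (hab : (a, b) ∈ RefSet w) (k : ℕ) (hk : 1 ≤ k)
    (c : Fin k → ℝ) (p : Fin k → Fin n × Fin n)
    (hc : ∀ i, 0 < c i) (hp : ∀ i, p i ∈ RefSet w) (hne : ∀ i, p i ≠ (a, b))
    (hinj : Function.Injective p) :
    (Pi.single b 1 - Pi.single a 1 : Fin n → ℝ) ≠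
      ∑ i, c i • (Pi.single (p i).2 1 - Pi.single (p i).1 1 : Fin n → ℝ) :=
  edge_vector_extreme_general w a b hab k c p hc hp hne

end SchubertToric
end

section
/- Let w ∈ Sₙ and let a, b ∈ {1,…,n} with a > b. Then there exists a descending path from a to b in Γ_w, i.e. a sequence a = a₀ > a₁ > ⋯ > a_k = b with k ≥ 1 and (a_{i−1}, a_i) ∈ Ref(w) for every 1 ≤ i ≤ k, if and only if (a,b) is an inversion of w, i.e. w⁻¹(a) < w⁻¹(b). -/
namespace SchubertToric

open Equiv

/-!
A pair `(w i, w j)` with `i < j` and `w j < w i` lies in `Ref(w)` as soon as no position strictly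
between `i` and `j` carries a value strictly between `w j` and `w i`: transposing the positions
`i` and `j` then destroys the inversion `(i, j)` and merely relabels all the others.
Edges of `Γ_w` therefore move forward in `w⁻¹`, which gives one direction by transitivity.
Conversely, an inversion `(a, b)` that is not an edge splits at some value `b < w k < a` at a
position between `w⁻¹ a` and `w⁻¹ b`, and induction on `a - b` builds the descending path.
-/

open Relation

theorem transGen_iff_exists_seq {α : Type*} {r : α → α → Prop} {a b : α} :
    TransGen r a b ↔
      ∃ (k : ℕ) (c : ℕ → α), 1 ≤ k ∧ c 0 = a ∧ c k = b ∧
        ∀ i < k, r (c i) (c (i + 1)) := by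
  constructor
  · intro h
    induction h with
    | @single x hax => exact ⟨1, fun i => if i = 0 then a else x, le_rfl, rfl, rfl, by simpa⟩
    | @tail x y _ hxy ih =>
      obtain ⟨k, c, hk, hc0, hck, hc⟩ := ih
      refine ⟨k + 1, fun i => if i ≤ k then c i else y, by omega, by simpa, by simp, ?_⟩
      intro i hi
      rcases Nat.lt_succ_iff_lt_or_eq.1 hi with hi | rfl
      · simpa [hi.le, Nat.succ_le_of_lt hi] using hc i hi
      · simpa [hck] using hxy
  · rintro ⟨k, c, hk, rfl, rfl, hc⟩
    induction k, hk using Nat.le_induction with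
    | base => exact .single (hc 0 one_pos)
    | succ k hk ih => exact (ih fun i hi => hc i (by omega)).tail (hc k (by omega))

theorem lt_iff_lt_of_notMem_Ioo {α : Type*} [LinearOrder α] {x y z : α} (hyx : y < x)
    (hz : z ∉ Set.Ioo y x) (hzy : z ≠ y) : z < y ↔ z < x := by
  rw [Set.mem_Ioo, not_and_or, not_lt, not_lt] at hz
  rcases hz with hz | hz <;> constructor <;> intro <;> order

theorem lt_iff_lt_of_notMem_Ioo' {α : Type*} [LinearOrder α] {x y z : α} (hyx : y < x)
    (hz : z ∉ Set.Ioo y x) (hzx : z ≠ x) : x < z ↔ y < z := by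
  rw [Set.mem_Ioo, not_and_or, not_lt, not_lt] at hz
  rcases hz with hz | hz <;> constructor <;> intro <;> order

section SwapLength

variable {n : ℕ} {i j : Fin n}

def inversions (w : Perm (Fin n)) : Finset (Fin n × Fin n) :=
  Finset.univ.filter fun p => p.1 < p.2 ∧ w p.2 < w p.1

@[simp]
theorem mem_inversions {w : Perm (Fin n)} {p : Fin n × Fin n} :
    p ∈ inversions w ↔ p.1 < p.2 ∧ w p.2 < w p.1 := by
  simp [inversions]

theorem card_inversions (w : Perm (Fin n)) : (inversions w).card = invCount w := rfl

/-- The transposition of the positions `i < j` preserves the order of every pair of positions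
except `(i, j)` and the pairs `(i, k)`, `(k, j)` with `i < k < j`; the latter are fixed instead.
On pairs `p.1 < p.2` this is the relabelling of inversions of `w` by those of `w * swap i j`. -/
def swapPair (i j : Fin n) (p : Fin n × Fin n) : Fin n × Fin n :=
  if p.1 = i ∧ p.2 < j ∨ i < p.1 ∧ p.2 = j then p else (swap i j p.1, swap i j p.2)

theorem swapPair_fst_lt_snd (hij : i < j) {p : Fin n × Fin n} (hp : p.1 < p.2)
    (hne : p ≠ (i, j)) : (swapPair i j p).1 < (swapPair i j p).2 := by
  grind [swapPair]

theorem swapPair_ne (hij : i < j) {p : Fin n × Fin n} (hp : p.1 < p.2) :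
    swapPair i j p ≠ (i, j) := by
  grind [swapPair]

theorem swapPair_swapPair (hij : i < j) {p : Fin n × Fin n} (hp : p.1 < p.2) :
    swapPair i j (swapPair i j p) = p := by
  grind (splits := 20) [swapPair]

theorem mul_swap_lt_iff_lt_swapPair {w : Perm (Fin n)} (hw : w j < w i)
    (hmid : ∀ k, i < k → k < j → w k ∉ Set.Ioo (w j) (w i)) {p : Fin n × Fin n}
    (hp : p.1 < p.2) :
    (w * swap i j) p.2 < (w * swap i j) p.1 ↔ w (swapPair i j p).2 < w (swapPair i j p).1 := by
  obtain ⟨p1, p2⟩ := p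
  simp only [swapPair, Perm.mul_apply] at *
  split_ifs with h
  · rcases h with ⟨rfl, h2⟩ | ⟨h1, rfl⟩
    · rw [swap_apply_left, swap_apply_of_ne_of_ne hp.ne' h2.ne]
      exact lt_iff_lt_of_notMem_Ioo hw (hmid p2 hp h2) (w.injective.ne h2.ne)
    · rw [swap_apply_right, swap_apply_of_ne_of_ne h1.ne' hp.ne]
      exact lt_iff_lt_of_notMem_Ioo' hw (hmid p1 h1 hp) (w.injective.ne h1.ne')
  · rfl

theorem invCount_swap_mul_add_one {w : Perm (Fin n)} (hij : i < j) (hw : w j < w i)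
    (hmid : ∀ k, i < k → k < j → w k ∉ Set.Ioo (w j) (w i)) :
    invCount (swap (w i) (w j) * w) + 1 = invCount w := by
  have hmem : (i, j) ∈ inversions w := by simp [hij, hw]
  rw [← mul_swap_eq_swap_mul, ← card_inversions, ← card_inversions,
    ← Finset.card_erase_add_one hmem]
  congr 1
  have hne : ∀ p ∈ inversions (w * swap i j), p ≠ (i, j) := by
    rintro _ hp rfl
    simp [hw.not_gt] at hp
  refine Finset.card_nbij' (swapPair i j) (swapPair i j) ?_ ?_ ?_ ?_
  · intro p hp
    obtain ⟨hlt, hinv⟩ := mem_inversions.1 hp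
    refine Finset.mem_erase.2 ⟨swapPair_ne hij hlt, mem_inversions.2 ⟨?_, ?_⟩⟩
    · exact swapPair_fst_lt_snd hij hlt (hne p hp)
    · exact (mul_swap_lt_iff_lt_swapPair hw hmid hlt).1 hinv
  · intro q hq
    obtain ⟨hqne, hq⟩ := Finset.mem_erase.1 hq
    obtain ⟨hlt, hinv⟩ := mem_inversions.1 hq
    have hlt' := swapPair_fst_lt_snd hij hlt hqne
    refine mem_inversions.2 ⟨hlt', (mul_swap_lt_iff_lt_swapPair hw hmid hlt').2 ?_⟩
    rwa [swapPair_swapPair hij hlt]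
  · intro p hp
    exact swapPair_swapPair hij (mem_inversions.1 hp).1
  · intro p hp
    exact swapPair_swapPair hij (mem_inversions.1 (Finset.mem_of_mem_erase hp)).1

end SwapLength

section DescendingPath

variable {n : ℕ} {w : Perm (Fin n)}

def DescendingEdge (w : Perm (Fin n)) (a b : Fin n) : Prop :=
  b < a ∧ (a, b) ∈ RefSet w

theorem symm_lt_symm_of_mem_refSet {a b : Fin n} (h : (a, b) ∈ RefSet w) :
    w.symm a < w.symm b := by
  obtain ⟨i, j, hij, hab, -⟩ := h
  simp only [Prod.mk.injEq] at hab
  simpa [hab.1, hab.2] using hij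

theorem symm_lt_symm_of_transGen {a b : Fin n} (h : TransGen (DescendingEdge w) a b) :
    w.symm a < w.symm b := by
  have hlt : TransGen (· < ·) (w.symm a) (w.symm b) :=
    h.lift w.symm fun _ _ hxy => symm_lt_symm_of_mem_refSet hxy.2
  rwa [transGen_eq_self] at hlt

theorem mem_refSet_of_forall_notMem_Ioo {a b : Fin n} (hba : b < a) (hinv : w.symm a < w.symm b)
    (hmid : ∀ k, w.symm a < k → k < w.symm b → w k ∉ Set.Ioo b a) :
    (a, b) ∈ RefSet w := by
  refine ⟨w.symm a, w.symm b, hinv, by simp, ?_⟩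
  exact invCount_swap_mul_add_one hinv (by simpa) (by simpa using hmid)

theorem transGen_descendingEdge_of_inversion {a b : Fin n} (hba : b < a)
    (hinv : w.symm a < w.symm b) :
    TransGen (DescendingEdge w) a b := by
  by_cases hsplit : ∃ k, w.symm a < k ∧ k < w.symm b ∧ w k ∈ Set.Ioo b a
  · obtain ⟨k, hak, hkb, hbk, hka⟩ := hsplit
    exact (transGen_descendingEdge_of_inversion hka (by simpa)).trans
      (transGen_descendingEdge_of_inversion hbk (by simpa))
  · push Not at hsplit
    exact .single ⟨hba, mem_refSet_of_forall_notMem_Ioo hba hinv hsplit⟩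
termination_by (a : ℕ) - b
decreasing_by all_goals simp only [Fin.lt_def] at *; omega

end DescendingPath

/-- For `a > b`, there is a descending path from `a` to `b` in `Γ_w`
(a sequence `a = a₀ > a₁ > ⋯ > a_k = b`, `k ≥ 1`, with `(a_{i−1}, a_i) ∈ Ref(w)`) iff
`(a,b)` is an inversion of `w`, i.e. `w⁻¹(a) < w⁻¹(b)`. -/
theorem descending_path_iff_inversion {n : ℕ} (w : Equiv.Perm (Fin n))
    (a b : Fin n) (hba : b < a) :
    (∃ (k : ℕ) (c : ℕ → Fin n), 1 ≤ k ∧ c 0 = a ∧ c k = b ∧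
        (∀ i < k, c (i + 1) < c i) ∧ (∀ i < k, (c i, c (i + 1)) ∈ RefSet w)) ↔
      w.symm a < w.symm b := by
  have hpath : (∃ (k : ℕ) (c : ℕ → Fin n), 1 ≤ k ∧ c 0 = a ∧ c k = b ∧
        (∀ i < k, c (i + 1) < c i) ∧ (∀ i < k, (c i, c (i + 1)) ∈ RefSet w)) ↔
      TransGen (DescendingEdge w) a b := by
    simp only [transGen_iff_exists_seq, DescendingEdge, imp_and, forall_and]
  rw [hpath]
  exact ⟨symm_lt_symm_of_transGen, transGen_descendingEdge_of_inversion hba⟩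

end SchubertToric
end
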